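/- In the single-field General Lotto game with Scouts with budgets B, R > 0 and detection probability u ∈ [0,1], if u ≤ B/R ≤ 1, then the value of the game equals (u + B/R)/2. -/

import Mathlib

/-!
Against Red's uniform law on `[0, 2R]` every unit of Blue's budget buys exactly `1/(2R)` of
winning probability: a revealed call of `x` with probability `t` wins `t ≤ (1 - x/2R) + t·x/2R`,
and an unrevealed allocation `Z` wins with probability `P(X ≤ Z) ≤ E[Z]/2R`. Integrating, Blue
gets at most `u/2 + B/(2R)`. Conversely, Blue calls every revealed allocation (cost at most `uR`)
and spends the rest of the budget on the unrevealed branch by playing uniform on `[0, 2R]` with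
probability `p` and `0` otherwise; since `P(Z ≥ x) ≥ 1 - x/2R` for the uniform `Z`, this wins
with probability at least `u + (1 - u) p / 2 = (u + B/R)/2` against every Red strategy.
-/

open MeasureTheory Set

/-- A strategy for Red in the General Lotto game with Scouts: the law of a nonnegative
random variable `X` with `E[X] ≤ R`. -/
structure RedStrategy (R : ℝ) where
  μ : Measure ℝ
  prob : IsProbabilityMeasure μ
  nonneg : μ (Iio 0) = 0
  budget : ∫⁻ x, ENNReal.ofReal x ∂μ ≤ ENNReal.ofReal R

/-- A strategy for Blue in GL-S(B,R,u): a calling probability `t x ∈ [0,1]` used when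
Red's allocation `x` is revealed (probability `u`), and the law `ν` of the nonnegative
allocation `Z` used when it is not revealed.  Feasibility: for every feasible Red
strategy, `u·E[t(X)·X] + (1-u)·E[Z] ≤ B`. -/
structure BlueStrategy (B R u : ℝ) where
  t : ℝ → ℝ
  t_mble : Measurable t
  t_mem : ∀ x, t x ∈ Icc (0 : ℝ) 1
  ν : Measure ℝ
  prob : IsProbabilityMeasure ν
  nonneg : ν (Iio 0) = 0
  budget : ∀ σR : RedStrategy R,
    ENNReal.ofReal u * ∫⁻ x, ENNReal.ofReal (t x * x) ∂σR.μ
      + ENNReal.ofReal (1 - u) * ∫⁻ z, ENNReal.ofReal z ∂ν ≤ ENNReal.ofReal B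

/-- Expected payoff to Blue (his win probability):
`u·E[t(X)] + (1-u)·P(Z ≥ X)`, ties going to Blue. -/
noncomputable def payoff {B R u : ℝ} (σB : BlueStrategy B R u) (σR : RedStrategy R) :
    ENNReal :=
  ENNReal.ofReal u * ∫⁻ x, ENNReal.ofReal (σB.t x) ∂σR.μ
    + ENNReal.ofReal (1 - u) * ∫⁻ x, σB.ν {z | x ≤ z} ∂σR.μ

open ProbabilityTheory
open scoped ENNReal

lemma lintegral_measure_Ici_eq_lintegral_measure_Iic {α : Type*} [TopologicalSpace α]
    [MeasurableSpace α] [OpensMeasurableSpace α] [PartialOrder α] [OrderClosedTopology α]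
    [SecondCountableTopology α] (μ ν : Measure α) [SFinite μ] [SFinite ν] :
    ∫⁻ x, ν (Ici x) ∂μ = ∫⁻ z, μ (Iic z) ∂ν := by
  have h := Measure.prod_apply (μ := μ) (ν := ν) measurableSet_le'
  rw [Measure.prod_apply_symm measurableSet_le'] at h
  exact h.symm

section UniformIcc

variable {c : ℝ}

lemma isProbabilityMeasure_cond_Icc (hc : 0 < c) : IsProbabilityMeasure (volume[|Icc 0 c]) :=
  cond_isProbabilityMeasure_of_finite (by simp [hc]) (by simp)

lemma cond_Icc_Iio_zero : volume[|Icc (0 : ℝ) c] (Iio 0) = 0 := by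
  have h : Icc 0 c ∩ Iio (0 : ℝ) = ∅ :=
    eq_empty_of_forall_notMem fun x hx => not_lt.2 hx.1.1 hx.2
  rw [cond_apply measurableSet_Icc, h, measure_empty, mul_zero]

lemma cond_Icc_Iic_le (hc : 0 < c) (z : ℝ) :
    volume[|Icc 0 c] (Iic z) ≤ ENNReal.ofReal (z / c) := by
  rw [cond_apply measurableSet_Icc, Real.volume_Icc, sub_zero, div_eq_inv_mul,
    ENNReal.ofReal_mul (inv_nonneg.2 hc.le), ENNReal.ofReal_inv_of_pos hc]
  gcongr
  calc volume (Icc 0 c ∩ Iic z) ≤ volume (Icc 0 z) := measure_mono fun x hx => ⟨hx.1.1, hx.2⟩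
    _ = ENNReal.ofReal z := by simp [Real.volume_Icc]

lemma one_sub_ofReal_div_le_cond_Icc_Ici (hc : 0 < c) (x : ℝ) :
    1 - ENNReal.ofReal (x / c) ≤ volume[|Icc 0 c] (Ici x) := by
  have := isProbabilityMeasure_cond_Icc hc
  rw [← compl_Iio, prob_compl_eq_one_sub measurableSet_Iio]
  exact tsub_le_tsub_left ((measure_mono Iio_subset_Iic_self).trans (cond_Icc_Iic_le hc x)) 1

lemma lintegral_ofReal_cond_Icc (hc : 0 < c) {f : ℝ → ℝ} (hf : ContinuousOn f (Icc 0 c))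
    (hf₀ : ∀ x ∈ Icc 0 c, 0 ≤ f x) :
    ∫⁻ x, ENNReal.ofReal (f x) ∂volume[|Icc 0 c] = ENNReal.ofReal ((∫ x in 0..c, f x) / c) := by
  have hf₀' : 0 ≤ᵐ[volume.restrict (Icc 0 c)] f := by
    filter_upwards [ae_restrict_mem measurableSet_Icc] with x hx using hf₀ x hx
  rw [ProbabilityTheory.cond, lintegral_smul_measure,
    ← ofReal_integral_eq_lintegral_ofReal hf.integrableOn_Icc hf₀', integral_Icc_eq_integral_Ioc,
    ← intervalIntegral.integral_of_le hc.le, Real.volume_Icc, sub_zero, smul_eq_mul,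
    ← ENNReal.ofReal_inv_of_pos hc, ← ENNReal.ofReal_mul (inv_nonneg.2 hc.le), inv_mul_eq_div]

lemma lintegral_ofReal_id_cond_Icc (hc : 0 < c) :
    ∫⁻ x, ENNReal.ofReal x ∂volume[|Icc 0 c] = ENNReal.ofReal (c / 2) := by
  rw [lintegral_ofReal_cond_Icc (f := fun x => x) hc continuousOn_id fun x hx => hx.1, integral_id]
  congr 1
  field_simp
  ring

lemma lintegral_ofReal_smul_cond_Icc_add_smul_dirac_zero (hc : 0 < c) (a b : ℝ≥0∞) :
    ∫⁻ z, ENNReal.ofReal z ∂(a • volume[|Icc 0 c] + b • Measure.dirac 0)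
      = a * ENNReal.ofReal (c / 2) := by
  rw [lintegral_add_measure, lintegral_smul_measure, lintegral_smul_measure, lintegral_dirac,
    lintegral_ofReal_id_cond_Icc hc, ENNReal.ofReal_zero, smul_zero, add_zero, smul_eq_mul]

lemma lintegral_ofReal_one_sub_div_cond_Icc (hc : 0 < c) :
    ∫⁻ x, ENNReal.ofReal (1 - x / c) ∂volume[|Icc 0 c] = 2⁻¹ := by
  have h : (∫ x in 0..c, (1 - x / c)) / c = 2⁻¹ := by
    rw [intervalIntegral.integral_sub intervalIntegrable_const
        (intervalIntegral.intervalIntegrable_id.div_const c),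
      intervalIntegral.integral_const, intervalIntegral.integral_div, integral_id]
    field_simp
    ring
  rw [lintegral_ofReal_cond_Icc hc (by fun_prop)
    fun x hx => sub_nonneg.2 ((div_le_one hc).2 hx.2), h, ENNReal.ofReal_inv_of_pos two_pos,
    ENNReal.ofReal_ofNat]

lemma lintegral_ofReal_le_cond_Icc (hc : 0 < c) {t : ℝ → ℝ} (ht : Measurable t)
    (ht₀₁ : ∀ x, t x ∈ Icc (0 : ℝ) 1) :
    ∫⁻ x, ENNReal.ofReal (t x) ∂volume[|Icc 0 c]
      ≤ 2⁻¹ + ENNReal.ofReal c⁻¹ * ∫⁻ x, ENNReal.ofReal (t x * x) ∂volume[|Icc 0 c] := by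
  have hmeas : Measurable fun x => ENNReal.ofReal (t x * x) := by fun_prop
  calc ∫⁻ x, ENNReal.ofReal (t x) ∂volume[|Icc 0 c]
      ≤ ∫⁻ x, (ENNReal.ofReal (1 - x / c) + ENNReal.ofReal c⁻¹ * ENNReal.ofReal (t x * x))
          ∂volume[|Icc 0 c] := by
        refine lintegral_mono_ae ?_
        filter_upwards [ae_cond_mem measurableSet_Icc] with x hx
        obtain ⟨ht₀, ht₁⟩ := ht₀₁ x
        have hxc : x / c ≤ 1 := (div_le_one hc).2 hx.2
        rw [← ENNReal.ofReal_mul (inv_nonneg.2 hc.le),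
          ← ENNReal.ofReal_add (sub_nonneg.2 hxc)
            (mul_nonneg (inv_nonneg.2 hc.le) (mul_nonneg ht₀ hx.1))]
        refine ENNReal.ofReal_le_ofReal ?_
        -- `t ≤ (1 - x/c) + t x/c` is `0 ≤ (1 - t) (1 - x/c)`
        have key : 0 ≤ (1 - t x) * (1 - x / c) := mul_nonneg (sub_nonneg.2 ht₁) (sub_nonneg.2 hxc)
        linear_combination key
    _ = 2⁻¹ + ENNReal.ofReal c⁻¹ * ∫⁻ x, ENNReal.ofReal (t x * x) ∂volume[|Icc 0 c] := by
        rw [lintegral_add_right _ (hmeas.const_mul _), lintegral_const_mul _ hmeas,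
          lintegral_ofReal_one_sub_div_cond_Icc hc]

lemma lintegral_cond_Icc_measure_Ici_le (hc : 0 < c) (ν : Measure ℝ) [SFinite ν] :
    ∫⁻ x, ν (Ici x) ∂volume[|Icc 0 c] ≤ ENNReal.ofReal c⁻¹ * ∫⁻ z, ENNReal.ofReal z ∂ν := by
  rw [lintegral_measure_Ici_eq_lintegral_measure_Iic,
    ← lintegral_const_mul _ ENNReal.measurable_ofReal]
  refine lintegral_mono fun z => (cond_Icc_Iic_le hc z).trans_eq ?_
  rw [← ENNReal.ofReal_mul (inv_nonneg.2 hc.le), inv_mul_eq_div]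

lemma one_sub_lintegral_le_lintegral_cond_Icc_Ici (hc : 0 < c) (μ : Measure ℝ)
    [IsProbabilityMeasure μ] :
    1 - ENNReal.ofReal c⁻¹ * ∫⁻ x, ENNReal.ofReal x ∂μ ≤ ∫⁻ x, volume[|Icc 0 c] (Ici x) ∂μ := by
  have hdiv : ∀ x, ENNReal.ofReal (x / c) = ENNReal.ofReal c⁻¹ * ENNReal.ofReal x := fun x => by
    rw [← ENNReal.ofReal_mul (inv_nonneg.2 hc.le), inv_mul_eq_div]
  calc 1 - ENNReal.ofReal c⁻¹ * ∫⁻ x, ENNReal.ofReal x ∂μ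
      = ∫⁻ _, 1 ∂μ - ∫⁻ x, ENNReal.ofReal (x / c) ∂μ := by
        simp_rw [lintegral_one, measure_univ, hdiv, lintegral_const_mul _ ENNReal.measurable_ofReal]
    _ ≤ ∫⁻ x, (1 - ENNReal.ofReal (x / c)) ∂μ := lintegral_sub_le _ _ (by fun_prop)
    _ ≤ ∫⁻ x, volume[|Icc 0 c] (Ici x) ∂μ :=
        lintegral_mono (one_sub_ofReal_div_le_cond_Icc_Ici hc)

end UniformIcc

lemma isProbabilityMeasure_ofReal_smul_add {α : Type*} [MeasurableSpace α] {p : ℝ}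
    (hp : p ∈ Icc (0 : ℝ) 1) (μ ν : Measure α) [IsProbabilityMeasure μ] [IsProbabilityMeasure ν] :
    IsProbabilityMeasure (ENNReal.ofReal p • μ + ENNReal.ofReal (1 - p) • ν) := by
  constructor
  rw [Measure.add_apply, Measure.smul_apply, Measure.smul_apply, measure_univ, measure_univ,
    smul_eq_mul, smul_eq_mul, mul_one, mul_one, ← ENNReal.ofReal_add hp.1 (sub_nonneg.2 hp.2),
    add_sub_cancel, ENNReal.ofReal_one]

noncomputable def uniformRed {R : ℝ} (hR : 0 < R) : RedStrategy R where
  μ := volume[|Icc 0 (2 * R)]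
  prob := isProbabilityMeasure_cond_Icc (by positivity)
  nonneg := cond_Icc_Iio_zero
  budget := by
    rw [lintegral_ofReal_id_cond_Icc (by positivity), mul_div_cancel_left₀ R two_ne_zero]

theorem payoff_uniformRed_le {B R u : ℝ} (hB : 0 ≤ B) (hR : 0 < R) (hu : 0 ≤ u)
    (σB : BlueStrategy B R u) :
    payoff σB (uniformRed hR) ≤ ENNReal.ofReal ((u + B / R) / 2) := by
  have := σB.prob
  have hc : 0 < 2 * R := by positivity
  let U := volume[|Icc 0 (2 * R)]
  calc payoff σB (uniformRed hR)
      ≤ ENNReal.ofReal u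
            * (2⁻¹ + ENNReal.ofReal (2 * R)⁻¹ * ∫⁻ x, ENNReal.ofReal (σB.t x * x) ∂U)
          + ENNReal.ofReal (1 - u)
            * (ENNReal.ofReal (2 * R)⁻¹ * ∫⁻ z, ENNReal.ofReal z ∂σB.ν) := by
        unfold payoff
        gcongr
        · exact lintegral_ofReal_le_cond_Icc hc σB.t_mble σB.t_mem
        · exact lintegral_cond_Icc_measure_Ici_le hc σB.ν
    _ = ENNReal.ofReal u * 2⁻¹ + ENNReal.ofReal (2 * R)⁻¹
          * (ENNReal.ofReal u * ∫⁻ x, ENNReal.ofReal (σB.t x * x) ∂U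
            + ENNReal.ofReal (1 - u) * ∫⁻ z, ENNReal.ofReal z ∂σB.ν) := by ring
    _ ≤ ENNReal.ofReal u * 2⁻¹ + ENNReal.ofReal (2 * R)⁻¹ * ENNReal.ofReal B := by
        gcongr
        exact σB.budget (uniformRed hR)
    _ = ENNReal.ofReal ((u + B / R) / 2) := by
        rw [← ENNReal.ofReal_ofNat 2, ← ENNReal.ofReal_inv_of_pos two_pos,
          ← ENNReal.ofReal_mul hu, ← ENNReal.ofReal_mul (by positivity),
          ← ENNReal.ofReal_add (by positivity) (by positivity)]
        congr 1
        field_simp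

noncomputable def scoutBlue {B R u p : ℝ} (hR : 0 < R) (hu : u ∈ Icc (0 : ℝ) 1)
    (hp : p ∈ Icc (0 : ℝ) 1) (hbudget : u * R + (1 - u) * (p * R) ≤ B) : BlueStrategy B R u where
  t _ := 1
  t_mble := measurable_const
  t_mem _ := ⟨zero_le_one, le_rfl⟩
  ν := ENNReal.ofReal p • volume[|Icc 0 (2 * R)] + ENNReal.ofReal (1 - p) • Measure.dirac 0
  prob :=
    have := isProbabilityMeasure_cond_Icc (c := 2 * R) (by positivity)
    isProbabilityMeasure_ofReal_smul_add hp _ _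
  nonneg := by
    simp [cond_Icc_Iio_zero]
  budget σR := by
    rw [lintegral_ofReal_smul_cond_Icc_add_smul_dirac_zero (by positivity),
      mul_div_cancel_left₀ R two_ne_zero, ← ENNReal.ofReal_mul hp.1]
    calc ENNReal.ofReal u * ∫⁻ x, ENNReal.ofReal (1 * x) ∂σR.μ
          + ENNReal.ofReal (1 - u) * ENNReal.ofReal (p * R)
        ≤ ENNReal.ofReal u * ENNReal.ofReal R
          + ENNReal.ofReal (1 - u) * ENNReal.ofReal (p * R) := by
          simp_rw [one_mul]
          gcongr
          exact σR.budget
      _ = ENNReal.ofReal (u * R + (1 - u) * (p * R)) := by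
          rw [← ENNReal.ofReal_mul hu.1, ← ENNReal.ofReal_mul (sub_nonneg.2 hu.2),
            ← ENNReal.ofReal_add (mul_nonneg hu.1 hR.le)
              (mul_nonneg (sub_nonneg.2 hu.2) (mul_nonneg hp.1 hR.le))]
      _ ≤ ENNReal.ofReal B := ENNReal.ofReal_le_ofReal hbudget

theorem le_payoff_scoutBlue {B R u p : ℝ} (hR : 0 < R) (hu : u ∈ Icc (0 : ℝ) 1)
    (hp : p ∈ Icc (0 : ℝ) 1) (hbudget : u * R + (1 - u) * (p * R) ≤ B) (σR : RedStrategy R) :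
    ENNReal.ofReal (u + (1 - u) * p / 2) ≤ payoff (scoutBlue hR hu hp hbudget) σR := by
  have := σR.prob
  have hc : 0 < 2 * R := by positivity
  have hhalf : 2⁻¹ ≤ ∫⁻ x, volume[|Icc 0 (2 * R)] (Ici x) ∂σR.μ := by
    refine le_trans ?_ (one_sub_lintegral_le_lintegral_cond_Icc_Ici hc σR.μ)
    calc (2⁻¹ : ℝ≥0∞) = 1 - ENNReal.ofReal (2 * R)⁻¹ * ENNReal.ofReal R := by
          rw [← ENNReal.ofReal_mul (by positivity), mul_inv, mul_assoc, inv_mul_cancel₀ hR.ne',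
            mul_one, ENNReal.ofReal_inv_of_pos two_pos, ENNReal.ofReal_ofNat,
            ENNReal.one_sub_inv_two]
      _ ≤ 1 - ENNReal.ofReal (2 * R)⁻¹ * ∫⁻ x, ENNReal.ofReal x ∂σR.μ := by
          gcongr
          exact σR.budget
  calc ENNReal.ofReal (u + (1 - u) * p / 2)
      = ENNReal.ofReal u * 1 + ENNReal.ofReal (1 - u) * (ENNReal.ofReal p * 2⁻¹) := by
        rw [mul_one, ← ENNReal.ofReal_ofNat 2, ← ENNReal.ofReal_inv_of_pos two_pos,
          ← ENNReal.ofReal_mul hp.1, ← ENNReal.ofReal_mul (sub_nonneg.2 hu.2),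
          ← ENNReal.ofReal_add hu.1 (mul_nonneg (sub_nonneg.2 hu.2) (mul_nonneg hp.1 (by norm_num)))]
        congr 1
        ring
    _ ≤ payoff (scoutBlue hR hu hp hbudget) σR := by
        unfold payoff scoutBlue
        gcongr
        · simp
        · calc ENNReal.ofReal p * 2⁻¹
              ≤ ENNReal.ofReal p * ∫⁻ x, volume[|Icc 0 (2 * R)] (Ici x) ∂σR.μ := by gcongr
            _ = ∫⁻ x, ENNReal.ofReal p * volume[|Icc 0 (2 * R)] (Ici x) ∂σR.μ :=
                (lintegral_const_mul' _ _ ENNReal.ofReal_ne_top).symm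
            _ ≤ _ := lintegral_mono fun x => le_self_add

theorem stmt_8 (B R u : ℝ) (hR : 0 < R) (hu : u ∈ Icc (0 : ℝ) 1)
    (h1 : u ≤ B / R) (h2 : B / R ≤ 1) :
    ∃ (σB : BlueStrategy B R u) (σR : RedStrategy R),
      (∀ σR' : RedStrategy R, ENNReal.ofReal ((u + B / R) / 2) ≤ payoff σB σR') ∧
      (∀ σB' : BlueStrategy B R u, payoff σB' σR ≤ ENNReal.ofReal ((u + B / R) / 2)) := by
  -- Blue's probability of playing the uniform law when not scouting; `x / 0 = 0` covers `u = 1`.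
  set p := (B / R - u) / (1 - u)
  have hp : p ∈ Icc (0 : ℝ) 1 :=
    ⟨div_nonneg (sub_nonneg.2 h1) (sub_nonneg.2 hu.2),
      div_le_one_of_le₀ (by linarith) (sub_nonneg.2 hu.2)⟩
  have hmix : (1 - u) * p = B / R - u := by
    rcases hu.2.eq_or_lt with rfl | hlt
    · rw [sub_self, zero_mul]
      linarith
    · exact mul_div_cancel₀ _ (sub_ne_zero.2 hlt.ne')
  have hbudget : u * R + (1 - u) * (p * R) ≤ B := by
    rw [← mul_assoc, hmix, ← add_mul, add_sub_cancel, div_mul_cancel₀ B hR.ne']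
  have hB : 0 ≤ B := by simpa using (le_div_iff₀ hR).1 (hu.1.trans h1)
  refine ⟨scoutBlue hR hu hp hbudget, uniformRed hR, fun σR => ?_,
    payoff_uniformRed_le hB hR hu.1⟩
  convert le_payoff_scoutBlue hR hu hp hbudget σR using 2
  linear_combination -hmix / 2
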